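/- Let X and Y be nonnegative real-valued random variables with distribution functions F_X and F_Y. Then there exists K > 0 with F_X(t) ≥ F_Y(t) for all t > K if and only if there exists K > 0 and a coupling (X', Y') of X and Y such that max{X', K} ≤ max{Y', K} almost surely. -/

import Mathlib

open MeasureTheory

/-!
Couple `X` and `Y` through their quantile functions, driven by one uniform variable `U` on
`(0, 1)`. Since `Q(u) ≤ t ↔ u ≤ F(t)`, each quantile `Q(U)` has the right law, and `F_Y ≤ F_X`
beyond `K` gives `Q_X(u) ≤ max (Q_Y(u)) K` pointwise. Conversely, `max X' K ≤ max Y' K` forces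
`{Y' ≤ t} ⊆ {X' ≤ t}` almost surely for `t > K`.
-/

open ProbabilityTheory Set Filter Topology

attribute [local instance] Measure.Subtype.measureSpace

namespace ProbabilityTheory

/-- Restricting to `(0, 1)` keeps the infimum away from the junk values `sInf ∅ = sInf univ = 0`. -/
noncomputable def quantile (m : Measure ℝ) (u : Ioo (0 : ℝ) 1) : ℝ :=
  sInf {t | (u : ℝ) ≤ cdf m t}

section Quantile

variable (m : Measure ℝ)

lemma quantile_le_iff (u : Ioo (0 : ℝ) 1) (t : ℝ) : quantile m u ≤ t ↔ (u : ℝ) ≤ cdf m t := by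
  have hne : {t | (u : ℝ) ≤ cdf m t}.Nonempty :=
    ((tendsto_cdf_atTop m).eventually (eventually_ge_nhds u.2.2)).exists
  have hbdd : BddBelow {t | (u : ℝ) ≤ cdf m t} := by
    obtain ⟨t₀, ht₀⟩ := eventually_atBot.mp
      ((tendsto_cdf_atBot m).eventually (eventually_lt_nhds u.2.1))
    exact ⟨t₀, fun s hs => le_of_not_gt fun hlt => (ht₀ s hlt.le).not_ge hs⟩
  refine ⟨fun h => ?_, fun h => csInf_le hbdd h⟩
  -- The set `{t | u ≤ F t}` contains its infimum, by right continuity of `F`.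
  have hinf : (u : ℝ) ≤ cdf m (quantile m u) := by
    refine ge_of_tendsto (((cdf m).right_continuous _).mono Ioi_subset_Ici_self).tendsto
      (eventually_nhdsWithin_of_forall fun s (hs : quantile m u < s) => ?_)
    obtain ⟨r, hr, hrs⟩ := exists_lt_of_csInf_lt hne hs
    exact hr.trans (monotone_cdf m hrs.le)
  exact hinf.trans (monotone_cdf m h)

lemma preimage_quantile_Iic (t : ℝ) :
    quantile m ⁻¹' Iic t = Subtype.val ⁻¹' Iic (cdf m t) :=
  ext fun u => quantile_le_iff m u t

lemma measurable_quantile : Measurable (quantile m) :=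
  measurable_of_Iic fun t => by
    rw [preimage_quantile_Iic]
    exact measurable_subtype_coe measurableSet_Iic

end Quantile

lemma volume_Iic_inter_Ioo_zero_one {c : ℝ} (hc : c ≤ 1) :
    volume (Iic c ∩ Ioo (0 : ℝ) 1) = ENNReal.ofReal c := by
  refine le_antisymm ?_ ?_
  · calc volume (Iic c ∩ Ioo (0 : ℝ) 1) ≤ volume (Ioc 0 c) :=
          measure_mono fun u hu => ⟨hu.2.1, hu.1⟩
      _ = ENNReal.ofReal c := by rw [Real.volume_Ioc, sub_zero]
  · calc ENNReal.ofReal c = volume (Ioo 0 c) := by rw [Real.volume_Ioo, sub_zero]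
      _ ≤ volume (Iic c ∩ Ioo (0 : ℝ) 1) :=
          measure_mono fun u hu => ⟨hu.2.le, hu.1, hu.2.trans_le hc⟩

instance : IsProbabilityMeasure (volume (α := Ioo (0 : ℝ) 1)) := by
  constructor
  rw [← preimage_univ, volume_preimage_coe measurableSet_Ioo.nullMeasurableSet MeasurableSet.univ,
    univ_inter, Real.volume_Ioo, sub_zero, ENNReal.ofReal_one]

lemma map_quantile (m : Measure ℝ) [IsProbabilityMeasure m] :
    (volume (α := Ioo (0 : ℝ) 1)).map (quantile m) = m := by
  refine Measure.ext_of_Iic _ _ fun t => ?_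
  rw [Measure.map_apply (measurable_quantile m) measurableSet_Iic, preimage_quantile_Iic,
    volume_preimage_coe measurableSet_Ioo.nullMeasurableSet measurableSet_Iic,
    volume_Iic_inter_Ioo_zero_one (cdf_le_one m t), ofReal_cdf]

lemma max_quantile_le_max_quantile {m₁ m₂ : Measure ℝ} {K : ℝ}
    (h : ∀ t, K < t → cdf m₂ t ≤ cdf m₁ t) (u : Ioo (0 : ℝ) 1) :
    max (quantile m₁ u) K ≤ max (quantile m₂ u) K := by
  refine max_le (le_of_forall_gt_imp_ge_of_dense fun s hs => ?_) (le_max_right _ _)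
  rw [quantile_le_iff]
  exact ((quantile_le_iff m₂ u s).1 ((le_max_left _ _).trans hs.le)).trans
    (h s ((le_max_right _ _).trans_lt hs))

end ProbabilityTheory

section Coupling

variable {Ω Ω' : Type*} [MeasurableSpace Ω] [MeasurableSpace Ω']

lemma ofReal_cdf_map (μ : Measure Ω) [IsProbabilityMeasure μ] {X : Ω → ℝ} (hX : Measurable X)
    (t : ℝ) : ENNReal.ofReal (cdf (μ.map X) t) = μ {ω | X ω ≤ t} := by
  have := Measure.isProbabilityMeasure_map (μ := μ) hX.aemeasurable
  rw [ofReal_cdf, Measure.map_apply hX measurableSet_Iic]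
  rfl

lemma measure_setOf_le_eq_of_map_eq {μ : Measure Ω} {ν : Measure Ω'} {X : Ω → ℝ} {X' : Ω' → ℝ}
    (hX : Measurable X) (hX' : Measurable X') (h : ν.map X' = μ.map X) (t : ℝ) :
    ν {ω | X' ω ≤ t} = μ {ω | X ω ≤ t} := by
  have := congrArg (· (Iic t)) h
  rw [Measure.map_apply hX' measurableSet_Iic, Measure.map_apply hX measurableSet_Iic] at this
  exact this

lemma measure_setOf_le_le_of_ae_max_le {ν : Measure Ω'} {X' Y' : Ω' → ℝ} {K t : ℝ}
    (h : ∀ᵐ ω ∂ν, max (X' ω) K ≤ max (Y' ω) K) (ht : K < t) :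
    ν {ω | Y' ω ≤ t} ≤ ν {ω | X' ω ≤ t} := by
  refine measure_mono_ae ?_
  filter_upwards [h] with ω hω (hY : Y' ω ≤ t)
  exact (le_max_left _ _).trans (hω.trans (max_le hY ht.le))

end Coupling

theorem tail_domination_iff_tail_coupling_general
    {Ω : Type*} [MeasurableSpace Ω] (μ : Measure Ω) [IsProbabilityMeasure μ]
    (X Y : Ω → ℝ) (hX : Measurable X) (hY : Measurable Y) :
    (∃ K > (0:ℝ), ∀ t : ℝ, K < t → μ {ω | Y ω ≤ t} ≤ μ {ω | X ω ≤ t}) ↔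
    (∃ K > (0:ℝ), ∃ (Ω' : Type) (_ : MeasurableSpace Ω') (ν : Measure Ω'),
        IsProbabilityMeasure ν ∧
        ∃ X' Y' : Ω' → ℝ, Measurable X' ∧ Measurable Y' ∧
          ν.map X' = μ.map X ∧ ν.map Y' = μ.map Y ∧
          ∀ᵐ ω ∂ν, max (X' ω) K ≤ max (Y' ω) K) := by
  constructor
  · rintro ⟨K, hK, h⟩
    have := Measure.isProbabilityMeasure_map (μ := μ) hX.aemeasurable
    have := Measure.isProbabilityMeasure_map (μ := μ) hY.aemeasurable
    have hcdf : ∀ t, K < t → cdf (μ.map Y) t ≤ cdf (μ.map X) t := fun t ht =>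
      (ENNReal.ofReal_le_ofReal_iff (cdf_nonneg _ t)).1 <| by
        rw [ofReal_cdf_map μ hX, ofReal_cdf_map μ hY]
        exact h t ht
    exact ⟨K, hK, Ioo (0 : ℝ) 1, inferInstance, volume, inferInstance, quantile _, quantile _,
      measurable_quantile _, measurable_quantile _, map_quantile _, map_quantile _,
      ae_of_all _ (max_quantile_le_max_quantile hcdf)⟩
  · rintro ⟨K, hK, Ω', _, ν, _, X', Y', hX', hY', hXX', hYY', hcouple⟩
    refine ⟨K, hK, fun t ht => ?_⟩
    calc μ {ω | Y ω ≤ t} = ν {ω | Y' ω ≤ t} := (measure_setOf_le_eq_of_map_eq hY hY' hYY' t).symm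
      _ ≤ ν {ω | X' ω ≤ t} := measure_setOf_le_le_of_ae_max_le hcouple ht
      _ = μ {ω | X ω ≤ t} := measure_setOf_le_eq_of_map_eq hX hX' hXX' t

/-- Tail domination is equivalent to the existence of a coupling `(X', Y')` of
`X` and `Y` with `max X' K ≤ max Y' K` almost surely. -/
theorem tail_domination_iff_tail_coupling
    {Ω : Type*} [MeasurableSpace Ω] (μ : Measure Ω) [IsProbabilityMeasure μ]
    (X Y : Ω → ℝ) (hX : Measurable X) (hY : Measurable Y)
    (hX0 : ∀ ω, 0 ≤ X ω) (hY0 : ∀ ω, 0 ≤ Y ω) :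
    (∃ K > (0:ℝ), ∀ t : ℝ, K < t → μ {ω | Y ω ≤ t} ≤ μ {ω | X ω ≤ t}) ↔
    (∃ K > (0:ℝ), ∃ (Ω' : Type) (_ : MeasurableSpace Ω') (ν : Measure Ω'),
        IsProbabilityMeasure ν ∧
        ∃ X' Y' : Ω' → ℝ, Measurable X' ∧ Measurable Y' ∧
          ν.map X' = μ.map X ∧ ν.map Y' = μ.map Y ∧
          ∀ᵐ ω ∂ν, max (X' ω) K ≤ max (Y' ω) K) :=
  tail_domination_iff_tail_coupling_general μ X Y hX hY
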